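/- arXiv:1307.7584 — 2 statements merged into one kernel-verified Lean document; each statement's English description precedes it below -/
import Mathlib

section
/- Let S₁, S₂ be as above and suppose E[e^{-θS_i(s,t)}] ≤ e^{-θ r (t-s)} for some rate r and all 0 ≤ s ≤ t, i = 1,2. Then P(min_{0≤s≤t}(S₁(0,s)+S₂(s,t)) ≤ λt) ≤ (t+1) e^{-θ(r-λ)t} for all θ > 0 and λ ∈ ℝ. -/
open MeasureTheory ProbabilityTheory
open scoped ENNReal

/-- Closed-form transient lower bound on the two-hop Aloha throughput (Eq. (12)). -/
theorem stmt_7 {Ω : Type*} [MeasurableSpace Ω] (μ : Measure Ω) [IsProbabilityMeasure μ]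
    (S₁ S₂ : ℕ → ℕ → Ω → ℝ)
    (hmeas₁ : ∀ s t, Measurable (S₁ s t)) (hmeas₂ : ∀ s t, Measurable (S₂ s t))
    (hnonneg₁ : ∀ s t ω, 0 ≤ S₁ s t ω) (hnonneg₂ : ∀ s t ω, 0 ≤ S₂ s t ω)
    (t : ℕ)
    (hindep : ∀ s ≤ t, IndepFun (S₁ 0 s) (S₂ s t) μ)
    (θ r lam : ℝ) (hθ : 0 < θ)
    (hL₁ : ∀ s u : ℕ, s ≤ u →
      (∫⁻ ω, ENNReal.ofReal (Real.exp (-θ * S₁ s u ω)) ∂μ) ≤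
        ENNReal.ofReal (Real.exp (-θ * r * ((u : ℝ) - s))))
    (hL₂ : ∀ s u : ℕ, s ≤ u →
      (∫⁻ ω, ENNReal.ofReal (Real.exp (-θ * S₂ s u ω)) ∂μ) ≤
        ENNReal.ofReal (Real.exp (-θ * r * ((u : ℝ) - s)))) :
    μ {ω | (⨅ s : Fin (t + 1), (S₁ 0 s ω + S₂ s t ω)) ≤ lam * t} ≤
      ENNReal.ofReal (((t : ℝ) + 1) * Real.exp (-θ * (r - lam) * t)) := by
  -- per-index Chernoff bound
  have key : ∀ s : Fin (t + 1),
      μ {ω | S₁ 0 s ω + S₂ s t ω ≤ lam * t} ≤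
        ENNReal.ofReal (Real.exp (-θ * (r - lam) * t)) := by
    intro s
    have hst : (s : ℕ) ≤ t := Nat.lt_succ_iff.mp s.isLt
    set f : Ω → ℝ≥0∞ := fun ω => ENNReal.ofReal (Real.exp (-θ * S₁ 0 s ω)) with hf
    set g : Ω → ℝ≥0∞ := fun ω => ENNReal.ofReal (Real.exp (-θ * S₂ s t ω)) with hg
    have hφ : Measurable fun x : ℝ => ENNReal.ofReal (Real.exp (-θ * x)) :=
      ENNReal.measurable_ofReal.comp (Real.measurable_exp.comp (measurable_const.mul measurable_id))
    have hfm : Measurable f := hφ.comp (hmeas₁ 0 s)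
    have hgm : Measurable g := hφ.comp (hmeas₂ s t)
    have hind : IndepFun f g μ := (hindep s hst).comp hφ hφ
    have hmul : (∫⁻ ω, (f * g) ω ∂μ) = (∫⁻ ω, f ω ∂μ) * ∫⁻ ω, g ω ∂μ :=
      lintegral_mul_eq_lintegral_mul_lintegral_of_indepFun hfm hgm hind
    have hprod : (∫⁻ ω, (f * g) ω ∂μ) ≤ ENNReal.ofReal (Real.exp (-θ * r * t)) := by
      rw [hmul]
      calc (∫⁻ ω, f ω ∂μ) * ∫⁻ ω, g ω ∂μ
          ≤ ENNReal.ofReal (Real.exp (-θ * r * ((s : ℝ) - ((0:ℕ):ℝ)))) *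
            ENNReal.ofReal (Real.exp (-θ * r * ((t : ℝ) - s))) :=
            mul_le_mul' (hL₁ 0 s (Nat.zero_le _)) (hL₂ s t hst)
        _ = ENNReal.ofReal (Real.exp (-θ * r * t)) := by
            rw [← ENNReal.ofReal_mul (le_of_lt (Real.exp_pos _)), ← Real.exp_add]
            ring_nf
    set ε : ℝ≥0∞ := ENNReal.ofReal (Real.exp (-θ * (lam * t))) with hε
    have hεpos : 0 < ε := ENNReal.ofReal_pos.mpr (Real.exp_pos _)
    have hεne : ε ≠ ⊤ := ENNReal.ofReal_ne_top
    have hsub : {ω | S₁ 0 s ω + S₂ s t ω ≤ lam * t} ⊆ {ω | ε ≤ (f * g) ω} := by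
      intro ω hω
      simp only [Set.mem_setOf_eq] at hω ⊢
      have : (f * g) ω = ENNReal.ofReal (Real.exp (-θ * (S₁ 0 s ω + S₂ s t ω))) := by
        simp only [Pi.mul_apply, hf, hg,
          ← ENNReal.ofReal_mul (le_of_lt (Real.exp_pos _)), ← Real.exp_add]
        ring_nf
      rw [this, hε]
      apply ENNReal.ofReal_le_ofReal
      apply Real.exp_le_exp.mpr
      nlinarith
    have hcher : ε * μ {ω | S₁ 0 s ω + S₂ s t ω ≤ lam * t} ≤
        ENNReal.ofReal (Real.exp (-θ * r * t)) := by
      calc ε * μ {ω | S₁ 0 s ω + S₂ s t ω ≤ lam * t}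
          ≤ ε * μ {ω | ε ≤ (f * g) ω} := by
            exact mul_le_mul_right (measure_mono hsub) ε
        _ ≤ ∫⁻ ω, (f * g) ω ∂μ := mul_meas_ge_le_lintegral₀ (hfm.mul hgm).aemeasurable ε
        _ ≤ _ := hprod
    have : μ {ω | S₁ 0 s ω + S₂ s t ω ≤ lam * t} ≤
        ENNReal.ofReal (Real.exp (-θ * r * t)) / ε := by
      rw [ENNReal.le_div_iff_mul_le (Or.inl hεpos.ne') (Or.inl hεne)]
      rwa [mul_comm]
    refine this.trans (le_of_eq ?_)
    rw [hε, ← ENNReal.ofReal_div_of_pos (Real.exp_pos _), ← Real.exp_sub]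
    ring_nf
  -- union bound
  have hsub : {ω | (⨅ s : Fin (t + 1), (S₁ 0 s ω + S₂ s t ω)) ≤ lam * t} ⊆
      ⋃ s : Fin (t + 1), {ω | S₁ 0 s ω + S₂ s t ω ≤ lam * t} := by
    intro ω hω
    simp only [Set.mem_setOf_eq] at hω
    obtain ⟨x, hx⟩ := Finite.exists_min (fun s : Fin (t + 1) => S₁ 0 s ω + S₂ s t ω)
    refine Set.mem_iUnion.mpr ⟨x, ?_⟩
    exact le_trans (le_ciInf hx) hω
  calc μ {ω | (⨅ s : Fin (t + 1), (S₁ 0 s ω + S₂ s t ω)) ≤ lam * t}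
      ≤ ∑ s : Fin (t + 1), μ {ω | S₁ 0 s ω + S₂ s t ω ≤ lam * t} :=
        (measure_mono hsub).trans (measure_iUnion_fintype_le _ _)
    _ ≤ ∑ _s : Fin (t + 1), ENNReal.ofReal (Real.exp (-θ * (r - lam) * t)) :=
        Finset.sum_le_sum fun s _ => key s
    _ = ENNReal.ofReal (((t : ℝ) + 1) * Real.exp (-θ * (r - lam) * t)) := by
        rw [Finset.sum_const, Finset.card_univ, Fintype.card_fin,
          ENNReal.ofReal_mul (by positivity)]
        simp [nsmul_eq_mul]
        rw [ENNReal.ofReal_add (by positivity) zero_le_one]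
        norm_num
end

section
/- Let k ≥ 1 and S₁, …, S_k be bivariate processes satisfying E[e^{θS_j(s,t)}] ≤ e^{θ r_j(θ)(t-s)} for some θ > 0, and independent over non-overlapping intervals. Set r(θ) = max_j r_j(θ). Then for any ε > 0 and t ≥ 1, with λ = r(θ) - log ε/(θt), one has P(inf_{0≤u₁≤…≤u_{k-1}≤t} Σ_{j=1}^k S_j(u_{j-1}, u_j) ≥ λt) ≤ ε. -/
open MeasureTheory ProbabilityTheory

lemma lintegral_exp_sum_aux {Ω : Type*} [MeasurableSpace Ω] (μ : Measure Ω)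
    [IsProbabilityMeasure μ] {k : ℕ} (f : Fin k → Ω → ℝ) (hf : ∀ j, Measurable (f j)) (θ : ℝ)
    (hindep : iIndepFun f μ) (s : Finset (Fin k)) :
    (∫⁻ ω, ENNReal.ofReal (Real.exp (θ * ∑ j ∈ s, f j ω)) ∂μ)
      = ∏ j ∈ s, ∫⁻ ω, ENNReal.ofReal (Real.exp (θ * f j ω)) ∂μ := by
  classical
  induction s using Finset.induction_on with
  | empty => simp
  | @insert i s hi ih =>
    rw [Finset.prod_insert hi, ← ih]
    have hφ : Measurable fun x : ℝ => ENNReal.ofReal (Real.exp (θ * x)) :=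
      ENNReal.measurable_ofReal.comp (Real.measurable_exp.comp (measurable_id.const_mul θ))
    have hind : IndepFun (fun ω => ENNReal.ofReal (Real.exp (θ * f i ω)))
        (fun ω => ENNReal.ofReal (Real.exp (θ * ∑ j ∈ s, f j ω))) μ := by
      have h1 : IndepFun (f i) (∑ j ∈ s, f j) μ :=
        (hindep.indepFun_finsetSum_of_notMem hf hi).symm
      have h2 := h1.comp hφ hφ
      have : (fun x : ℝ => ENNReal.ofReal (Real.exp (θ * x))) ∘ (∑ j ∈ s, f j)
          = fun ω => ENNReal.ofReal (Real.exp (θ * ∑ j ∈ s, f j ω)) := by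
        funext ω; simp [Finset.sum_apply]
      rwa [this] at h2
    have hmg : Measurable fun ω => ENNReal.ofReal (Real.exp (θ * ∑ j ∈ s, f j ω)) :=
      hφ.comp (Finset.measurable_sum s fun j _ => hf j)
    have key := lintegral_mul_eq_lintegral_mul_lintegral_of_indepFun
      (f := fun ω => ENNReal.ofReal (Real.exp (θ * f i ω)))
      (g := fun ω => ENNReal.ofReal (Real.exp (θ * ∑ j ∈ s, f j ω)))
      (hφ.comp (hf i)) hmg hind
    rw [← key]
    congr 1
    funext ω
    rw [Finset.sum_insert hi, mul_add, Real.exp_add,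
      ENNReal.ofReal_mul (Real.exp_nonneg _)]
    rfl

/-- Theorem 1 (upper capacity bound), Aloha case. -/
theorem stmt_11 {Ω : Type*} [MeasurableSpace Ω] (μ : Measure Ω) [IsProbabilityMeasure μ]
    (k : ℕ) (hk : 1 ≤ k)
    (S : Fin k → ℕ → ℕ → Ω → ℝ)
    (hmeas : ∀ j s t, Measurable (S j s t))
    (θ : ℝ) (hθ : 0 < θ)
    (rpos : Fin k → ℝ)
    (hMGF : ∀ (j : Fin k) (s t : ℕ), s ≤ t →
      (∫⁻ ω, ENNReal.ofReal (Real.exp (θ * S j s t ω)) ∂μ) ≤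
        ENNReal.ofReal (Real.exp (θ * rpos j * ((t : ℝ) - s))))
    (hindep : ∀ u : Fin (k + 1) → ℕ, Monotone u →
      iIndepFun
        (fun j : Fin k => S j (u j.castSucc) (u j.succ)) μ)
    (ε : ℝ) (hε : 0 < ε) (t : ℕ) (ht : 1 ≤ t) :
    μ {ω |
        ((⨆ j : Fin k, rpos j) - Real.log ε / (θ * t)) * t ≤
        (⨅ u : {u : Fin (k + 1) → ℕ // Monotone u ∧ u 0 = 0 ∧ u (Fin.last k) = t},
          ∑ j : Fin k, S j (u.1 j.castSucc) (u.1 j.succ) ω)} ≤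
      ENNReal.ofReal ε := by
  classical
  set r : ℝ := ⨆ j : Fin k, rpos j with hr
  haveI : NeZero k := ⟨by omega⟩
  set lam : ℝ := r - Real.log ε / (θ * t) with hlam
  -- the chosen partition: all mass in the last hop
  set u0 : Fin (k + 1) → ℕ := fun j => if j = Fin.last k then t else 0 with hu0def
  have hu0mono : Monotone u0 := by
    intro a b hab
    by_cases hb : b = Fin.last k
    · have : u0 a ≤ t := by simp only [hu0def]; split <;> omega
      simpa [hu0def, hb] using this
    · have ha : a ≠ Fin.last k := by
        intro h
        exact hb (le_antisymm (Fin.le_last b) (h ▸ hab))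
      simp [hu0def, ha, hb]
  have hu00 : u0 0 = 0 := by
    simp only [hu0def]
    rw [if_neg]
    intro h
    have := congrArg Fin.val h
    simp [Fin.val_last] at this
    omega
  have hu0t : u0 (Fin.last k) = t := by simp [hu0def]
  have hcast : ∀ j : Fin k, u0 j.castSucc = 0 := by
    intro j
    simp only [hu0def]
    rw [if_neg]
    intro h
    have := congrArg Fin.val h
    simp [Fin.val_last] at this
    omega
  set f : Fin k → Ω → ℝ := fun j => S j (u0 j.castSucc) (u0 j.succ) with hfdef
  have hfmeas : ∀ j, Measurable (f j) := fun j => hmeas _ _ _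
  set X : Ω → ℝ := fun ω => ∑ j : Fin k, f j ω with hX
  have hXmeas : Measurable X := Finset.measurable_sum _ fun j _ => hfmeas j
  -- Step 1 : event inclusion
  have step1 : μ {ω |
        (r - Real.log ε / (θ * t)) * t ≤
        (⨅ u : {u : Fin (k + 1) → ℕ // Monotone u ∧ u 0 = 0 ∧ u (Fin.last k) = t},
          ∑ j : Fin k, S j (u.1 j.castSucc) (u.1 j.succ) ω)}
      ≤ μ {ω | lam * t ≤ X ω} := by
    apply measure_mono
    intro ω hω
    simp only [Set.mem_setOf_eq] at hω ⊢
    haveI : Finite {u : Fin (k + 1) → ℕ // Monotone u ∧ u 0 = 0 ∧ u (Fin.last k) = t} := by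
      apply Finite.of_injective
        (fun u => (fun j => (⟨u.1 j, by
          have h1 : u.1 j ≤ u.1 (Fin.last k) := u.2.1 (Fin.le_last j)
          rw [u.2.2.2] at h1
          omega⟩ : Fin (t + 1)) : Fin (k + 1) → Fin (t + 1)))
      intro u v h
      apply Subtype.ext
      funext j
      exact congrArg Fin.val (congrFun h j)
    have hb : BddBelow (Set.range
        fun u : {u : Fin (k + 1) → ℕ // Monotone u ∧ u 0 = 0 ∧ u (Fin.last k) = t} =>
          ∑ j : Fin k, S j (u.1 j.castSucc) (u.1 j.succ) ω) :=
      (Set.finite_range _).bddBelow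
    exact le_trans hω (ciInf_le hb ⟨u0, hu0mono, hu00, hu0t⟩)
  -- Step 2 : Chernoff bound
  have hθt : θ * (t : ℝ) ≠ 0 := by
    have ht' : (0 : ℝ) < t := by exact_mod_cast Nat.lt_of_lt_of_le Nat.zero_lt_one ht
    positivity
  have step2 : μ {ω | lam * t ≤ X ω} ≤ ENNReal.ofReal ε := by
    have hsub : {ω | lam * t ≤ X ω} ⊆
        {ω | ENNReal.ofReal (Real.exp (θ * (lam * t))) ≤
          ENNReal.ofReal (Real.exp (θ * X ω))} := by
      intro ω hω
      simp only [Set.mem_setOf_eq] at hω ⊢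
      exact ENNReal.ofReal_le_ofReal (Real.exp_le_exp.2 (by nlinarith))
    have hc0 : ENNReal.ofReal (Real.exp (θ * (lam * t))) ≠ 0 := by
      simp [ENNReal.ofReal_eq_zero, not_le, Real.exp_pos]
    have hct : ENNReal.ofReal (Real.exp (θ * (lam * t))) ≠ ⊤ := ENNReal.ofReal_ne_top
    have hφmeas : Measurable fun ω => ENNReal.ofReal (Real.exp (θ * X ω)) :=
      ENNReal.measurable_ofReal.comp
        ((Real.measurable_exp.comp (hXmeas.const_mul θ)))
    have markov := meas_ge_le_lintegral_div (μ := μ)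
      (f := fun ω => ENNReal.ofReal (Real.exp (θ * X ω))) hφmeas.aemeasurable hc0 hct
    -- bound the lintegral
    have hprod := lintegral_exp_sum_aux μ f hfmeas θ (hindep u0 hu0mono) Finset.univ
    have hbound : (∫⁻ ω, ENNReal.ofReal (Real.exp (θ * X ω)) ∂μ) ≤
        ENNReal.ofReal (Real.exp (θ * r * t)) := by
      rw [hX]
      rw [hprod]
      have hfac : ∀ j : Fin k,
          (∫⁻ ω, ENNReal.ofReal (Real.exp (θ * f j ω)) ∂μ) ≤
            ENNReal.ofReal (Real.exp (θ * r * ((u0 j.succ : ℕ) : ℝ))) := by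
        intro j
        have hle : u0 j.castSucc ≤ u0 j.succ := hu0mono (Fin.castSucc_le_succ j)
        refine (hMGF j _ _ hle).trans ?_
        apply ENNReal.ofReal_le_ofReal
        apply Real.exp_le_exp.2
        have hc0' : ((u0 j.castSucc : ℕ) : ℝ) = 0 := by rw [hcast j]; norm_num
        rw [hc0', sub_zero]
        have hrj : rpos j ≤ r := le_ciSup (Set.finite_range rpos).bddAbove j
        have hnn : (0 : ℝ) ≤ ((u0 j.succ : ℕ) : ℝ) := Nat.cast_nonneg _
        nlinarith [mul_nonneg (mul_nonneg hθ.le (sub_nonneg.2 hrj)) hnn]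
      refine (Finset.prod_le_prod (fun j _ => zero_le) (fun j _ => hfac j)).trans ?_
      rw [← ENNReal.ofReal_prod_of_nonneg (fun j _ => (Real.exp_nonneg _))]
      apply ENNReal.ofReal_le_ofReal
      rw [← Real.exp_sum, ← Finset.mul_sum]
      apply le_of_eq
      congr 1
      -- ∑ j, (u0 j.succ : ℝ) = t
      have hsum : (∑ j : Fin k, ((u0 j.succ : ℕ) : ℝ)) = (t : ℝ) := by
        set jm : Fin k := ⟨k - 1, by omega⟩ with hjm
        have hjmval : (jm : ℕ) = k - 1 := rfl
        have heq : ∀ j : Fin k, u0 j.succ = if j = jm then t else 0 := by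
          intro j
          by_cases h : j = jm
          · subst h
            rw [if_pos rfl]
            simp only [hu0def]
            rw [if_pos]
            rw [Fin.ext_iff]
            simp only [Fin.val_succ, Fin.val_last, hjmval]
            omega
          · rw [if_neg h]
            simp only [hu0def]
            rw [if_neg]
            intro hc
            apply h
            have := congrArg Fin.val hc
            simp only [Fin.val_succ, Fin.val_last] at this
            rw [Fin.ext_iff, hjmval]
            omega
        simp only [heq]
        rw [Finset.sum_congr rfl (fun j _ => rfl)]
        push_cast
        rw [Finset.sum_ite_eq' Finset.univ jm (fun _ => (t : ℝ))]
        simp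
      rw [hsum]
    calc μ {ω | lam * t ≤ X ω}
        ≤ μ {ω | ENNReal.ofReal (Real.exp (θ * (lam * t))) ≤
            ENNReal.ofReal (Real.exp (θ * X ω))} := measure_mono hsub
      _ ≤ (∫⁻ ω, ENNReal.ofReal (Real.exp (θ * X ω)) ∂μ) /
            ENNReal.ofReal (Real.exp (θ * (lam * t))) := markov
      _ ≤ ENNReal.ofReal (Real.exp (θ * r * t)) /
            ENNReal.ofReal (Real.exp (θ * (lam * t))) := by
            exact ENNReal.div_le_div_right hbound _
      _ = ENNReal.ofReal ε := by
            rw [← ENNReal.ofReal_div_of_pos (Real.exp_pos _), ← Real.exp_sub]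
            have : θ * r * t - θ * (lam * t) = Real.log ε := by
              rw [hlam]
              field_simp
              ring
            rw [this, Real.exp_log hε]
  exact le_trans step1 step2
end
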